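/- arXiv:2402.09309 — 3 statements merged into one kernel-verified Lean document; each statement's English description precedes it below -/
import Mathlib

section
/- Let p be even and let t, j be nonnegative integers. The sum over all nonnegative integer tuples (a_0,...,a_p) with a_0+...+a_p = j and 0·a_0+1·a_1+...+p·a_p = t of the product binomial(b_0+a_0-1, a_0)·binomial(b_1, a_1)·binomial(b_2+a_2-1, a_2)·binomial(b_3, a_3)···binomial(b_p+a_p-1, a_p) is at most binomial(b_0+b_1+...+b_p + j(p+2)/2, j), for any nonnegative integers b_0,...,b_p. -/
open Finset

/-- Generalized Vandermonde identity over `piAntidiag`. -/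
lemma vandermonde_piAntidiag {ι : Type*} [DecidableEq ι] (s : Finset ι) (c : ι → ℕ) (j : ℕ) :
    ∑ a ∈ piAntidiag s j, ∏ i ∈ s, (c i).choose (a i) = (∑ i ∈ s, c i).choose j := by
  induction s using Finset.cons_induction generalizing j with
  | empty => cases j <;> simp [piAntidiag_empty]
  | cons i s hi ih =>
    rw [piAntidiag_cons, sum_disjiUnion, sum_cons, Nat.add_choose_eq]
    refine sum_congr rfl fun p hp => ?_
    rw [sum_map, ← ih p.2, mul_sum]
    refine sum_congr rfl fun a ha => ?_
    rw [mem_piAntidiag] at ha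
    have hai : a i = 0 := by
      by_contra h
      exact hi (ha.2 i h)
    rw [prod_cons]
    simp only [addRightEmbedding_apply]
    congr 1
    · simp [hai]
    · refine prod_congr rfl fun t ht => ?_
      have : t ≠ i := fun h => hi (h ▸ ht)
      simp [this]

lemma evensum (m j : ℕ) :
    ∑ i ∈ Finset.range (2 * m + 1), (if Even i then j else 0) = j * (m + 1) := by
  induction m with
  | zero => simp
  | succ m ih =>
    have h1 : 2 * (m + 1) + 1 = (2 * m + 1) + 1 + 1 := by ring
    rw [h1, Finset.sum_range_succ, Finset.sum_range_succ, ih]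
    have h2 : ¬ Even (2 * m + 1) := by simp [Nat.even_add_one, parity_simps]
    have h3 : Even (2 * m + 1 + 1) := by simp [Nat.even_add_one, h2]
    rw [if_neg h2, if_pos h3]
    ring

/-- Upper bound for the ranks of the terms of the symmetric power complex: for `p` even,
the sum over all nonnegative tuples `(a_0, …, a_p)` with `∑ a_i = j` and `∑ i·a_i = t`
of the alternating product `∏` (divided-power binomials at even `i`, exterior-power
binomials at odd `i`) is at most `(∑ b_i + j·(p+2)/2).choose j`. -/
theorem symmetric_power_rank_upper_bound (p j t : ℕ) (hp : Even p) (b : Fin (p + 1) → ℕ) :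
    ∑ a ∈ (Finset.Nat.antidiagonalTuple (p + 1) j).filter
        (fun a => ∑ i : Fin (p + 1), (i : ℕ) * a i = t),
      ∏ i : Fin (p + 1),
        (if Even (i : ℕ) then (b i + a i - 1).choose (a i) else (b i).choose (a i)) ≤
      ((∑ i, b i) + j * ((p + 2) / 2)).choose j := by
  obtain ⟨m, rfl⟩ := hp
  set c : Fin (m + m + 1) → ℕ := fun i => b i + if Even (i : ℕ) then j else 0 with hc
  calc
    ∑ a ∈ (Finset.Nat.antidiagonalTuple (m + m + 1) j).filter
        (fun a => ∑ i : Fin (m + m + 1), (i : ℕ) * a i = t),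
      ∏ i : Fin (m + m + 1),
        (if Even (i : ℕ) then (b i + a i - 1).choose (a i) else (b i).choose (a i))
      ≤ ∑ a ∈ Finset.Nat.antidiagonalTuple (m + m + 1) j,
          ∏ i : Fin (m + m + 1),
            (if Even (i : ℕ) then (b i + a i - 1).choose (a i) else (b i).choose (a i)) :=
      Finset.sum_le_sum_of_subset (Finset.filter_subset _ _)
    _ ≤ ∑ a ∈ Finset.Nat.antidiagonalTuple (m + m + 1) j,
          ∏ i : Fin (m + m + 1), (c i).choose (a i) := by
      refine Finset.sum_le_sum fun a ha => Finset.prod_le_prod' fun i _ => ?_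
      rw [Finset.Nat.mem_antidiagonalTuple] at ha
      have haij : a i ≤ j := ha ▸ Finset.single_le_sum (fun _ _ => Nat.zero_le _) (mem_univ i)
      by_cases h : Even (i : ℕ)
      · rw [if_pos h, hc]
        simp only [if_pos h]
        exact Nat.choose_le_choose _ (by omega)
      · rw [if_neg h, hc]
        simp only [if_neg h]
        simp
    _ = (∑ i, c i).choose j := by
      rw [← Finset.piAntidiag_univ_fin_eq_antidiagonalTuple]
      exact vandermonde_piAntidiag _ _ _
    _ = ((∑ i, b i) + j * ((m + m + 2) / 2)).choose j := by
      congr 1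
      rw [hc, Finset.sum_add_distrib]
      congr 1
      have : ∑ i : Fin (m + m + 1), (if Even (i : ℕ) then j else 0)
          = ∑ i ∈ Finset.range (m + m + 1), (if Even i then j else 0) :=
        Fin.sum_univ_eq_sum_range (fun i => if Even i then j else 0) _
      rw [this]
      have h2 : m + m + 1 = 2 * m + 1 := by ring
      rw [h2, evensum]
      have : (m + m + 2) / 2 = m + 1 := by omega
      rw [this]
end

section
/- For nonnegative integers b_0, b_1, b_2, j, t with j < t ≤ 2j, the sum over r from t - j to min(j, ⌊t/2⌋) of binomial(b_2 + r - 1, r)·binomial(b_1, t - 2r)·binomial(b_0 + j - t + r - 1, j - t + r) is at least binomial(b_1, 2j - t). -/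
/-- Lower bound for Betti numbers of symmetric powers in projective dimension 2, case
`j < t ≤ 2j`: the sum over `t - j ≤ r ≤ min j ⌊t/2⌋` of the products of binomials is at
least `b₁.choose (2j - t)`. -/
theorem betti_lower_bound_pd_two_gt (b₀ b₁ b₂ j t : ℕ) (hb₀ : 1 ≤ b₀) (hb₂ : 1 ≤ b₂)
    (h₁ : j < t) (h₂ : t ≤ 2 * j) :
    b₁.choose (2 * j - t) ≤
      ∑ r ∈ Finset.Icc (t - j) (min j (t / 2)),
        (b₂ + r - 1).choose r * b₁.choose (t - 2 * r) *
          (b₀ + (j + r - t) - 1).choose (j + r - t) := by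
  have hmem : t - j ∈ Finset.Icc (t - j) (min j (t / 2)) := by
    simp only [Finset.mem_Icc, le_refl, true_and, le_min_iff]
    exact ⟨by omega, Nat.le_div_iff_mul_le (by norm_num) |>.2 (by omega)⟩
  calc b₁.choose (2 * j - t)
      ≤ (b₂ + (t - j) - 1).choose (t - j) * b₁.choose (t - 2 * (t - j)) *
          (b₀ + (j + (t - j) - t) - 1).choose (j + (t - j) - t) := by
        have h0 : j + (t - j) - t = 0 := by omega
        have h2 : t - 2 * (t - j) = 2 * j - t := by omega
        rw [h0, h2, Nat.choose_zero_right, mul_one]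
        have : 1 ≤ (b₂ + (t - j) - 1).choose (t - j) :=
          Nat.one_le_iff_ne_zero.2 (by
            have := Nat.choose_pos (show t - j ≤ b₂ + (t - j) - 1 by omega)
            omega)
        nlinarith [Nat.choose_pos (show t - j ≤ b₂ + (t - j) - 1 by omega)]
    _ ≤ _ := Finset.single_le_sum (f := fun r => (b₂ + r - 1).choose r * b₁.choose (t - 2 * r) *
          (b₀ + (j + r - t) - 1).choose (j + r - t)) (fun i _ => Nat.zero_le _) hmem
end

section
/- Let p ≥ 1 and j ≥ 1 be integers and let F_• be a complex of length p with j-th symmetric power complex S_j(F_•). Then the length λ(S_j F_•) equals jp if p is even, and equals j(p-1) + min(rank F_p, j) if p is odd. -/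
/-!
Every index is at most `p`, so `∑ i·aᵢ ≤ p·j`, attained by `a = j·e_p` when `p` is even (no cap
at an even position). When `p` is odd, every index but the last is at most `p - 1`, so
`∑ i·aᵢ ≤ (p - 1)·j + a_p` with `a_p ≤ min (r p) j`; this is attained by putting
`min (r p) j` at `p` and the rest at the even position `p - 1`.
-/

open Finset

lemma sum_val_mul_single {n : ℕ} (k : Fin n) (c : ℕ) :
    ∑ i : Fin n, (i : ℕ) * (Pi.single k c : Fin n → ℕ) i = k * c := by
  simp [Pi.single_apply, mul_ite]

lemma sum_val_mul_le_mul_sum {p : ℕ} (a : Fin (p + 1) → ℕ) :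
    ∑ i : Fin (p + 1), (i : ℕ) * a i ≤ p * ∑ i, a i := by
  rw [mul_sum]
  exact sum_le_sum fun i _ => Nat.mul_le_mul_right _ (Fin.is_le i)

lemma sum_val_mul_le_pred_mul_sum_add_last {p : ℕ} (a : Fin (p + 1) → ℕ) :
    ∑ i : Fin (p + 1), (i : ℕ) * a i ≤ (p - 1) * ∑ i, a i + a (Fin.last p) := by
  rw [Fin.sum_univ_castSucc, Fin.sum_univ_castSucc, mul_add, Fin.val_last, add_assoc]
  gcongr
  · rw [mul_sum]
    exact sum_le_sum fun i _ => Nat.mul_le_mul_right _ (by simp; omega)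
  · rcases p with _ | p <;> simp [add_mul]

lemma exists_sum_eq_of_even {p : ℕ} (hp : Even p) (j : ℕ) (r : Fin (p + 1) → ℕ) :
    ∃ a : Fin (p + 1) → ℕ, (∑ i, a i) = j ∧ (∀ i : Fin (p + 1), Odd (i : ℕ) → a i ≤ r i) ∧
      (∑ i : Fin (p + 1), (i : ℕ) * a i) = j * p := by
  refine ⟨Pi.single (Fin.last p) j, by simp, fun i hi => ?_, by simp [sum_val_mul_single, mul_comm]⟩
  have hi_ne : i ≠ Fin.last p := by
    rintro rfl
    exact Nat.not_odd_iff_even.mpr hp (by simpa using hi)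
  simp [hi_ne]

lemma exists_sum_eq_of_odd {p : ℕ} (hp : Odd p) (j : ℕ) (r : Fin (p + 1) → ℕ) :
    ∃ a : Fin (p + 1) → ℕ, (∑ i, a i) = j ∧ (∀ i : Fin (p + 1), Odd (i : ℕ) → a i ≤ r i) ∧
      (∑ i : Fin (p + 1), (i : ℕ) * a i) = j * (p - 1) + min (r (Fin.last p)) j := by
  obtain ⟨q, rfl⟩ := hp
  set m := min (r (Fin.last (2 * q + 1))) j
  have hm : m ≤ j := min_le_right _ _
  refine ⟨Pi.single (Fin.last _) m + Pi.single ⟨2 * q, by omega⟩ (j - m), ?_, fun i hi => ?_, ?_⟩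
  · simp only [Pi.add_apply, sum_add_distrib, sum_pi_single']
    simp [hm]
  · have hi_ne : i ≠ ⟨2 * q, by omega⟩ := by
      rintro rfl
      exact Nat.not_odd_iff_even.mpr (even_two_mul q) hi
    rcases eq_or_ne i (Fin.last _) with rfl | h
    · simp [hi_ne, m]
    · simp [h, hi_ne]
  · simp only [Pi.add_apply, mul_add, sum_add_distrib, sum_val_mul_single, Fin.val_last]
    rw [Nat.add_sub_cancel, add_one_mul, add_right_comm, ← mul_add, Nat.add_sub_cancel' hm,
      mul_comm]

theorem length_symmetric_power_complex_general (p j : ℕ)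
    (r : Fin (p + 1) → ℕ) :
    IsGreatest {t : ℕ | ∃ a : Fin (p + 1) → ℕ,
        (∑ i, a i) = j ∧ (∀ i : Fin (p + 1), Odd (i : ℕ) → a i ≤ r i) ∧
          (∑ i : Fin (p + 1), (i : ℕ) * a i) = t}
      (if Even p then j * p else j * (p - 1) + min (r (Fin.last p)) j) := by
  refine ⟨?_, ?_⟩
  · split_ifs with hp
    · exact exists_sum_eq_of_even hp j r
    · exact exists_sum_eq_of_odd (Nat.not_even_iff_odd.mp hp) j r
  · rintro _ ⟨a, rfl, hodd, rfl⟩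
    split_ifs with hp
    · rw [mul_comm]
      exact sum_val_mul_le_mul_sum a
    · have hlast : a (Fin.last p) ≤ min (r (Fin.last p)) (∑ i, a i) :=
        le_min (hodd _ (by simpa using Nat.not_even_iff_odd.mp hp))
          (single_le_sum (fun i _ => Nat.zero_le _) (mem_univ _))
      calc ∑ i : Fin (p + 1), (i : ℕ) * a i ≤ (p - 1) * ∑ i, a i + a (Fin.last p) :=
            sum_val_mul_le_pred_mul_sum_add_last a
        _ ≤ _ := by rw [mul_comm]; gcongr

/-- The length of the symmetric power complex `S_j F_•` of a complex of free modules of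
length `p ≥ 1` with ranks `r i ≥ 1`: it is the largest `t` such that the system
`∑ a_i = j`, `∑ i·a_i = t` has a solution with `(r i).choose (a i) ≠ 0` at odd positions
(i.e. `a i ≤ r i` for odd `i`). This equals `j·p` if `p` is even, and
`j·(p-1) + min (r p) j` if `p` is odd. -/
theorem length_symmetric_power_complex (p j : ℕ) (hp : 1 ≤ p) (hj : 1 ≤ j)
    (r : Fin (p + 1) → ℕ) (hr : ∀ i, 1 ≤ r i) :
    IsGreatest {t : ℕ | ∃ a : Fin (p + 1) → ℕ,
        (∑ i, a i) = j ∧ (∀ i : Fin (p + 1), Odd (i : ℕ) → a i ≤ r i) ∧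
          (∑ i : Fin (p + 1), (i : ℕ) * a i) = t}
      (if Even p then j * p else j * (p - 1) + min (r (Fin.last p)) j) :=
  length_symmetric_power_complex_general p j r
end
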